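/- The G-orbit of a k-starter F under a finite group G is a 1-rotational k-factorization of the complete graph on G ∪ {∞}; conversely, every factor of a 1-rotational k-factorization of the complete graph on G ∪ {∞} is a k-starter under G. -/

import Mathlib

open SimpleGraph

/-- The image of a graph on `G ∪ {∞}` under right multiplication by `g` (with `∞ g = ∞`). -/
def shiftG {G : Type*} [Group G] (F : SimpleGraph (Option G)) (g : G) :
    SimpleGraph (Option G) :=
  F.map (Equiv.optionCongr (Equiv.mulRight g)).toEmbedding

/-- The `G`-stabilizer of a graph on `G ∪ {∞}`. -/
def stabG {G : Type*} [Group G] (F : SimpleGraph (Option G)) : Set G :=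
  {g | shiftG F g = F}

/-- A `k`-factor: a spanning `k`-regular subgraph of the complete graph. -/
def IsKFactor {V : Type*} (k : ℕ) (F : SimpleGraph V) : Prop :=
  ∀ v : V, (F.neighborSet v).ncard = k

/-- A `k`-factorization: a set of `k`-factors whose edges partition the complete graph. -/
def IsKFactorization {V : Type*} (k : ℕ) (𝓕 : Set (SimpleGraph V)) : Prop :=
  (∀ F ∈ 𝓕, IsKFactor k F) ∧
  ∀ u v : V, u ≠ v → ∃! F, F ∈ 𝓕 ∧ F.Adj u v

/-- A family of graphs on `G ∪ {∞}` is `1`-rotational if it is closed under the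
right multiplication action of `G`. -/
def IsRotational {G : Type*} [Group G] (𝓕 : Set (SimpleGraph (Option G))) : Prop :=
  ∀ F ∈ 𝓕, ∀ g : G, shiftG F g ∈ 𝓕

/-- The difference list of a graph on `G ∪ {∞}` covers every nonidentity element of `G`. -/
def DiffCovers {G : Type*} [Group G] (F : SimpleGraph (Option G)) : Prop :=
  ∀ d : G, d ≠ 1 → ∃ a b : G, F.Adj (some a) (some b) ∧ a * b⁻¹ = d

/-- A `k`-starter under `G`: a `k`-factor whose `G`-stabilizer has order `k` and whose
difference list covers `G ∖ {1}`. -/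
def IsStarter {G : Type*} [Group G] (k : ℕ) (F : SimpleGraph (Option G)) : Prop :=
  IsKFactor k F ∧ (stabG F).ncard = k ∧ DiffCovers F

/-- The graph `H` on `(G × ℤ_n) ∪ {∞}` constructed from a `2`-factor `F` of the complete
graph on `G ∪ {∞}`: join `∞` to `(x,k)` for `x ~ ∞` in `F`; join `(x,k)` to `(x,r)` for
`x ~ ∞` in `F` and `k ≠ r`; join `(x,k)` to `(y,r)` for every edge `[x,y]` of `F`
avoiding `∞`. -/
def Hgraph {G : Type*} [Group G] (F : SimpleGraph (Option G)) (n : ℕ) :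
    SimpleGraph (Option (G × Multiplicative (ZMod n))) :=
  SimpleGraph.fromRel (fun u v =>
    (∃ (x : G) (k : Multiplicative (ZMod n)),
        F.Adj none (some x) ∧ u = none ∧ v = some (x, k)) ∨
    (∃ (x : G) (k r : Multiplicative (ZMod n)),
        F.Adj none (some x) ∧ k ≠ r ∧ u = some (x, k) ∧ v = some (x, r)) ∨
    (∃ (x y : G) (k r : Multiplicative (ZMod n)),
        F.Adj (some x) (some y) ∧ u = some (x, k) ∧ v = some (y, r)))

/-!
Write `S(u, v)` (`adjShifts F u v`) for the set of `g ∈ G` such that the shift `F g` contains the edge `uv`. It is a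
union of right cosets of the stabilizer of `F`, so the orbit of `F` covers `uv` exactly once iff
`|S(u, v)|` equals the order of the stabilizer. For a `k`-starter, `|S(∞, x)|` is the degree of `∞`,
and `|S(a, b)|` is the number of ordered edges of `F` inside `G` with difference `ab⁻¹`. By the
covering condition each nonidentity difference occurs at least `k` times (a witness edge moved by
the stabilizer), while all these multiplicities add up to `(|G| - 1) k`; so each is exactly `k`.

Conversely, in a `1`-rotational `k`-factorization any two factors are related by a shift: it
matches a neighbour of `∞` in one factor with a neighbour of `∞` in the other. The factorization
is therefore the orbit of each of its factors, and the same count gives the starter conditions.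
-/

open Classical in
theorem SimpleGraph.ncard_neighborSet_eq_sum {V : Type*} [Fintype V] (H : SimpleGraph V) (v : V) :
    (H.neighborSet v).ncard = ∑ w, if H.Adj w v then 1 else 0 := by
  rw [Set.ncard_eq_toFinset_card', ← Finset.card_filter]
  congr 1
  ext w
  simp [adj_comm]

section

variable {G : Type*} [Group G]

theorem shiftG_adj (F : SimpleGraph (Option G)) (g : G) (u v : Option G) :
    (shiftG F g).Adj u v ↔ F.Adj (u.map (· * g⁻¹)) (v.map (· * g⁻¹)) := by
  rw [shiftG, ← comap_symm, comap_adj]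
  simp [Equiv.optionCongr]

theorem shiftG_one (F : SimpleGraph (Option G)) : shiftG F 1 = F := by
  ext u v
  simp [shiftG_adj]

theorem shiftG_shiftG (F : SimpleGraph (Option G)) (g h : G) :
    shiftG (shiftG F g) h = shiftG F (g * h) := by
  ext u v
  cases u <;> cases v <;> simp [shiftG_adj, mul_assoc]

theorem shiftG_mul_of_mem_stabG {F : SimpleGraph (Option G)} {s : G} (hs : s ∈ stabG F)
    (g : G) : shiftG F (s * g) = shiftG F g := by
  rw [← shiftG_shiftG, hs]

theorem mul_inv_mem_stabG_of_shiftG_eq {F : SimpleGraph (Option G)} {g h : G}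
    (hgh : shiftG F g = shiftG F h) : g * h⁻¹ ∈ stabG F := by
  show shiftG F (g * h⁻¹) = F
  rw [← shiftG_shiftG, hgh, shiftG_shiftG, mul_inv_cancel, shiftG_one]

theorem isKFactor_shiftG {k : ℕ} {F : SimpleGraph (Option G)} (hF : IsKFactor k F) (g : G) :
    IsKFactor k (shiftG F g) := by
  intro v
  erw [shiftG, neighborSet_map_equiv, Set.ncard_preimage_of_injective_subset_range
    (Equiv.injective _) (by simp)]
  exact hF _

def shiftOrbit (F : SimpleGraph (Option G)) : Set (SimpleGraph (Option G)) :=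
  {H | ∃ g : G, H = shiftG F g}

theorem isRotational_shiftOrbit (F : SimpleGraph (Option G)) : IsRotational (shiftOrbit F) := by
  rintro _ ⟨g, rfl⟩ h
  exact ⟨g * h, shiftG_shiftG F g h⟩

def adjShifts (F : SimpleGraph (Option G)) (u v : Option G) : Set G :=
  {g | (shiftG F g).Adj u v}

theorem adjShifts_comm (F : SimpleGraph (Option G)) (u v : Option G) :
    adjShifts F u v = adjShifts F v u := by
  ext g
  exact adj_comm (shiftG F g) u v

theorem mul_mem_adjShifts {F : SimpleGraph (Option G)} {u v : Option G} {s g : G}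
    (hs : s ∈ stabG F) (hg : g ∈ adjShifts F u v) : s * g ∈ adjShifts F u v := by
  show (shiftG F (s * g)).Adj u v
  rwa [shiftG_mul_of_mem_stabG hs]

theorem image_mul_right_stabG_subset {F : SimpleGraph (Option G)} {u v : Option G} {g₀ : G}
    (hg₀ : g₀ ∈ adjShifts F u v) : (· * g₀) '' stabG F ⊆ adjShifts F u v := by
  rintro _ ⟨s, hs, rfl⟩
  exact mul_mem_adjShifts hs hg₀

theorem mem_adjShifts_map_mul_iff (F : SimpleGraph (Option G)) (u v : Option G) (g c : G) :
    g * c ∈ adjShifts F (u.map (· * c)) (v.map (· * c)) ↔ g ∈ adjShifts F u v := by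
  cases u <;> cases v <;> simp [adjShifts, shiftG_adj, mul_assoc]

theorem ncard_adjShifts_map_mul (F : SimpleGraph (Option G)) (u v : Option G) (c : G) :
    (adjShifts F (u.map (· * c)) (v.map (· * c))).ncard = (adjShifts F u v).ncard := by
  have : adjShifts F u v = (· * c) ⁻¹' adjShifts F (u.map (· * c)) (v.map (· * c)) := by
    ext g
    exact (mem_adjShifts_map_mul_iff F u v g c).symm
  rw [this, Set.ncard_preimage_of_injective_subset_range (mul_left_injective c)]
  intro g _
  exact ⟨g * c⁻¹, inv_mul_cancel_right g c⟩

theorem mem_adjShifts_some_one_iff (F : SimpleGraph (Option G)) (u : Option G) (g : G) :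
    g ∈ adjShifts F u (some 1) ↔ F.Adj (u.map (· * g⁻¹)) (some g⁻¹) := by
  simp [adjShifts, shiftG_adj]

theorem diffCovers_iff (F : SimpleGraph (Option G)) :
    DiffCovers F ↔ ∀ d : G, d ≠ 1 → (adjShifts F (some d) (some 1)).Nonempty := by
  refine forall₂_congr fun d _ => ⟨?_, ?_⟩
  · rintro ⟨a, b, hab, rfl⟩
    exact ⟨b⁻¹, by simpa [mem_adjShifts_some_one_iff] using hab⟩
  · rintro ⟨g, hg⟩
    rw [mem_adjShifts_some_one_iff] at hg
    exact ⟨d * g⁻¹, g⁻¹, hg, by group⟩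

theorem ncard_adjShifts_none_some (F : SimpleGraph (Option G)) (x : G) :
    (adjShifts F none (some x)).ncard = (F.neighborSet none).ncard := by
  have hx := ncard_adjShifts_map_mul F none (some 1) x
  rw [Option.map_none, Option.map_some, one_mul] at hx
  have h1 : adjShifts F none (some 1) = (fun g : G => some g⁻¹) ⁻¹' F.neighborSet none := by
    ext g
    simp [mem_adjShifts_some_one_iff]
  rw [hx, h1, Set.ncard_preimage_of_injective_subset_range
    fun a b hab => inv_injective (Option.some_injective G hab)]
  rintro (_ | y) hy
  · exact absurd hy (F.irrefl)
  · exact ⟨y⁻¹, by simp⟩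

section Finite

variable [Finite G] {k : ℕ} {𝓕 : Set (SimpleGraph (Option G))} {F H : SimpleGraph (Option G)}
  {u v : Option G}

theorem ncard_stabG_le (h : (adjShifts F u v).Nonempty) :
    (stabG F).ncard ≤ (adjShifts F u v).ncard := by
  obtain ⟨g₀, hg₀⟩ := h
  rw [← Set.ncard_image_of_injective _ (mul_left_injective g₀)]
  exact Set.ncard_le_ncard (image_mul_right_stabG_subset hg₀)

theorem existsUnique_adj_iff :
    (∃! H, H ∈ shiftOrbit F ∧ H.Adj u v) ↔ (adjShifts F u v).ncard = (stabG F).ncard := by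
  constructor
  · rintro ⟨_, ⟨⟨g₀, rfl⟩, hg₀⟩, huniq⟩
    have hS : adjShifts F u v = (· * g₀) '' stabG F := by
      refine Set.Subset.antisymm (fun g hg => ?_) (image_mul_right_stabG_subset hg₀)
      exact ⟨g * g₀⁻¹, mul_inv_mem_stabG_of_shiftG_eq (huniq _ ⟨⟨g, rfl⟩, hg⟩),
        inv_mul_cancel_right g g₀⟩
    rw [hS, Set.ncard_image_of_injective _ (mul_left_injective g₀)]
  · intro hcard
    obtain ⟨g₀, hg₀⟩ : (adjShifts F u v).Nonempty := by
      rw [← Set.ncard_pos, hcard, Set.ncard_pos]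
      exact ⟨1, shiftG_one F⟩
    have hS : (· * g₀) '' stabG F = adjShifts F u v :=
      Set.eq_of_subset_of_ncard_le (image_mul_right_stabG_subset hg₀)
        (by rw [hcard, Set.ncard_image_of_injective _ (mul_left_injective g₀)])
    refine ⟨shiftG F g₀, ⟨⟨g₀, rfl⟩, hg₀⟩, ?_⟩
    rintro _ ⟨⟨g, rfl⟩, hg⟩
    obtain ⟨s, hs, rfl⟩ : g ∈ (· * g₀) '' stabG F := hS ▸ hg
    exact shiftG_mul_of_mem_stabG hs g₀

theorem IsKFactorization.exists_adj_none (h𝓕 : IsKFactorization k 𝓕) (hH : H ∈ 𝓕) :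
    ∃ x : G, H.Adj none (some x) := by
  obtain ⟨H', ⟨hH', hadj⟩, -⟩ := h𝓕.2 none (some 1) (Option.some_ne_none _).symm
  have hk : k ≠ 0 := by
    rw [← h𝓕.1 H' hH' none]
    exact ((Set.ncard_pos (Set.toFinite _)).2 ⟨_, hadj⟩).ne'
  obtain ⟨_ | x, hx⟩ := Set.nonempty_of_ncard_ne_zero (h𝓕.1 H hH none ▸ hk)
  · exact absurd hx (H.irrefl)
  · exact ⟨x, hx⟩

theorem IsKFactorization.eq_shiftOrbit (h𝓕 : IsKFactorization k 𝓕) (hrot : IsRotational 𝓕)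
    (hF : F ∈ 𝓕) : 𝓕 = shiftOrbit F := by
  ext H
  refine ⟨fun hH => ?_, fun ⟨g, hg⟩ => hg ▸ hrot F hF g⟩
  obtain ⟨x, hx⟩ := h𝓕.exists_adj_none hH
  obtain ⟨y, hy⟩ := h𝓕.exists_adj_none hF
  have hshift : (shiftG F (y⁻¹ * x)).Adj none (some x) := by
    simpa [shiftG_adj] using hy
  exact ⟨y⁻¹ * x, (h𝓕.2 none (some x) (Option.some_ne_none _).symm).unique ⟨hH, hx⟩
    ⟨hrot F hF _, hshift⟩⟩

theorem IsKFactorization.isStarter (h𝓕 : IsKFactorization k 𝓕) (hrot : IsRotational 𝓕)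
    (hF : F ∈ 𝓕) : IsStarter k F := by
  obtain ⟨hfac, huniq⟩ := h𝓕.eq_shiftOrbit hrot hF ▸ h𝓕
  refine ⟨hfac F ⟨1, (shiftG_one F).symm⟩, ?_, (diffCovers_iff F).2 fun d hd => ?_⟩
  · rw [← existsUnique_adj_iff.1 (huniq none (some 1) (Option.some_ne_none _).symm),
      ncard_adjShifts_none_some, h𝓕.1 F hF]
  · obtain ⟨_, ⟨⟨g, rfl⟩, hg⟩, -⟩ := huniq (some d) (some 1) (by simpa using hd)
    exact ⟨g, hg⟩

end Finite

section Fintype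

open Finset

variable [Fintype G] {k : ℕ} {F : SimpleGraph (Option G)}

theorem sum_ncard_adjShifts_some_one (hF : IsKFactor k F) :
    ∑ d : G, (adjShifts F (some d) (some 1)).ncard + k = Fintype.card G * k := by
  classical
  have hμ (d : G) : (adjShifts F (some d) (some 1)).ncard
      = ∑ g : G, if F.Adj (some (d * g⁻¹)) (some g⁻¹) then 1 else 0 := by
    rw [Set.ncard_eq_toFinset_card', ← card_filter]
    congr 1
    ext g
    simp [mem_adjShifts_some_one_iff]
  calc ∑ d : G, (adjShifts F (some d) (some 1)).ncard + k
      = ∑ y : G, ∑ x : G, (if F.Adj (some x) (some y) then 1 else 0)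
          + ∑ y : G, (if F.Adj none (some y) then 1 else 0) := by
        simp_rw [hμ]
        rw [sum_comm, ← Equiv.sum_comp (Equiv.inv G), ← hF none, ncard_neighborSet_eq_sum,
          Fintype.sum_option, if_neg (F.irrefl), zero_add]
        simp only [Equiv.inv_apply, inv_inv]
        congr 1
        · exact sum_congr rfl fun y _ => Equiv.sum_comp (Equiv.mulRight y)
            (fun x => if F.Adj (some x) (some y) then 1 else 0)
        · simp_rw [adj_comm F none]
    _ = ∑ y : G, (F.neighborSet (some y)).ncard := by
        simp_rw [← sum_add_distrib, ncard_neighborSet_eq_sum, Fintype.sum_option, add_comm]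
    _ = Fintype.card G * k := by
        simp [hF _]

theorem IsStarter.ncard_adjShifts_some_one (hF : IsStarter k F) {d : G}
    (hd : d ≠ 1) : (adjShifts F (some d) (some 1)).ncard = k := by
  classical
  obtain ⟨hreg, hstab, hcov⟩ := hF
  -- Padding the term at `e = 1` by `k` makes every term at least `k`, while the total is `|G| k`.
  have hle : ∀ e ∈ (univ : Finset G),
      k ≤ (adjShifts F (some e) (some 1)).ncard + if e = 1 then k else 0 := by
    intro e _
    by_cases he : e = 1
    · simp [he]
    · simpa [he, hstab] using ncard_stabG_le ((diffCovers_iff F).1 hcov e he)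
  have hsum : ∑ e : G, k
      = ∑ e : G, ((adjShifts F (some e) (some 1)).ncard + if e = 1 then k else 0) := by
    rw [sum_add_distrib, sum_ite_eq' univ (1 : G), if_pos (mem_univ _),
      sum_ncard_adjShifts_some_one hreg, sum_const, card_univ, smul_eq_mul]
  simpa [hd] using ((sum_eq_sum_iff_of_le hle).1 hsum d (mem_univ d)).symm

theorem IsStarter.ncard_adjShifts (hF : IsStarter k F) {u v : Option G}
    (huv : u ≠ v) : (adjShifts F u v).ncard = k := by
  match u, v with
  | none, none => exact absurd rfl huv
  | none, some b => rw [ncard_adjShifts_none_some, hF.1]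
  | some a, none => rw [adjShifts_comm, ncard_adjShifts_none_some, hF.1]
  | some a, some b =>
    have hab : a * b⁻¹ ≠ 1 := fun h => huv (by rw [mul_inv_eq_one.1 h])
    have := ncard_adjShifts_map_mul F (some (a * b⁻¹)) (some 1) b
    rw [Option.map_some, Option.map_some, inv_mul_cancel_right, one_mul] at this
    rw [this, hF.ncard_adjShifts_some_one hab]

theorem IsStarter.isKFactorization_shiftOrbit (hF : IsStarter k F) :
    IsKFactorization k (shiftOrbit F) :=
  ⟨by rintro _ ⟨g, rfl⟩; exact isKFactor_shiftG hF.1 g,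
    fun _ _ huv => existsUnique_adj_iff.2 ((hF.ncard_adjShifts huv).trans hF.2.1.symm)⟩

end Fintype

end

theorem stmt14_general {G : Type*} [Group G] [Fintype G] (k : ℕ) :
    (∀ F : SimpleGraph (Option G), IsStarter k F →
       IsKFactorization k {H | ∃ g : G, H = shiftG F g} ∧
       IsRotational {H | ∃ g : G, H = shiftG F g}) ∧
    (∀ 𝓕 : Set (SimpleGraph (Option G)), IsKFactorization k 𝓕 → IsRotational 𝓕 →
       ∀ F ∈ 𝓕, IsStarter k F) :=
  ⟨fun F hF => ⟨hF.isKFactorization_shiftOrbit, isRotational_shiftOrbit F⟩,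
    fun _ h𝓕 hrot _ hF => h𝓕.isStarter hrot hF⟩

theorem stmt14 {G : Type*} [Group G] [Fintype G] (k : ℕ) (hk : k ∣ Fintype.card G) :
    (∀ F : SimpleGraph (Option G), IsStarter k F →
       IsKFactorization k {H | ∃ g : G, H = shiftG F g} ∧
       IsRotational {H | ∃ g : G, H = shiftG F g}) ∧
    (∀ 𝓕 : Set (SimpleGraph (Option G)), IsKFactorization k 𝓕 → IsRotational 𝓕 →
       ∀ F ∈ 𝓕, IsStarter k F) :=
  stmt14_general k
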